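/- arXiv:1610.07118 — 3 statements merged into one kernel-verified Lean document; each statement's English description precedes it below -/
import Mathlib

section
/- For a monoid M, a positive integer i, and any list xs of elements of M, the recursively chunked monoid concatenation pmconcat i xs equals mconcat xs, where pmconcat i xs = mconcat xs when i ≤ 1 or length xs ≤ i, and otherwise pmconcat i xs = pmconcat i (map mconcat (chunk i xs)). -/
def mconcat {M : Type*} [Monoid M] : List M → M
  | [] => 1
  | x :: xs => x * mconcat xs

def chunk {α : Type*} (i : ℕ) (xs : List α) : List (List α) :=
  if xs.length ≤ i ∨ i = 0 then [xs]
  else xs.take i :: chunk i (xs.drop i)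
termination_by xs.length
decreasing_by
  rename_i h
  push_neg at h
  simp only [List.length_drop]
  omega

theorem chunk_length_lt {α : Type*} (i : ℕ) (xs : List α) (h1 : 1 < i)
    (h2 : i < xs.length) : (chunk i xs).length < xs.length := by
  rw [chunk, if_neg (by omega)]
  by_cases hc : (xs.drop i).length ≤ i ∨ i = 0
  · rw [chunk, if_pos hc]
    simp only [List.length_cons, List.length_nil]
    omega
  · push_neg at hc
    have := chunk_length_lt i (xs.drop i) h1 hc.1
    simp only [List.length_cons]
    simp only [List.length_drop] at this ⊢
    omega
termination_by xs.length
decreasing_by simp only [List.length_drop]; omega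

def pmconcat {M : Type*} [Monoid M] (i : ℕ) (xs : List M) : M :=
  if h : i ≤ 1 ∨ xs.length ≤ i then mconcat xs
  else pmconcat i ((chunk i xs).map mconcat)
termination_by xs.length
decreasing_by
  push_neg at h
  simp only [List.length_map]
  exact chunk_length_lt i xs (by omega) (by omega)

lemma mconcat_append {M : Type*} [Monoid M] (xs ys : List M) :
    mconcat (xs ++ ys) = mconcat xs * mconcat ys := by
  induction xs with
  | nil => simp [mconcat]
  | cons x xs ih => simp [mconcat, ih, mul_assoc]

lemma mconcat_chunk {M : Type*} [Monoid M] (i : ℕ) (xs : List M) :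
    mconcat ((chunk i xs).map mconcat) = mconcat xs := by
  rw [chunk]
  split
  · simp [mconcat, mul_one]
  · rename_i h
    push_neg at h
    simp only [List.map_cons, mconcat]
    rw [mconcat_chunk i (xs.drop i), ← mconcat_append, List.take_append_drop]
termination_by xs.length
decreasing_by simp only [List.length_drop]; omega

theorem pmconcat_eq_mconcat {M : Type*} [Monoid M] (i : ℕ) (hi : 0 < i)
    (xs : List M) : pmconcat i xs = mconcat xs := by
  rw [pmconcat]
  split
  · rfl
  · rename_i h
    push_neg at h
    rw [pmconcat_eq_mconcat i hi, mconcat_chunk]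
termination_by xs.length
decreasing_by
  simp only [List.length_map]
  exact chunk_length_lt i xs (by omega) (by omega)
end

section
/- Shifting indices distributes over makeIndices: for strings x, y, target tg, and naturals lo ≤ hi with length y ≥ 1, map (fun i => i + length x) (makeIndices y tg lo hi) = makeIndices (x ++ y) tg (length x + lo) (length x + hi). -/
/-- `subString o l s = take l (drop o s)` -/
def subString (o l : ℕ) (s : List Char) : List Char := (s.drop o).take l

/-- `i` is a good index of `s` for target `tg`. -/
def goodIndex (s tg : List Char) (i : ℕ) : Prop :=
  subString i tg.length s = tg ∧ i + tg.length ≤ s.length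

instance (s tg : List Char) (i : ℕ) : Decidable (goodIndex s tg i) := by
  unfold goodIndex; exact instDecidableAnd

/-- Collect all good indices of `s` for `tg` in the range `[lo, hi]`. -/
def makeIndices (s tg : List Char) (lo : ℕ) (hi : ℤ) : List ℕ :=
  if hi < lo then []
  else if goodIndex s tg lo then lo :: makeIndices s tg (lo + 1) hi
  else makeIndices s tg (lo + 1) hi
termination_by (hi + 1 - lo).toNat
decreasing_by all_goals (rename_i h _; omega)

def makeNewIndices (sl sr tg : List Char) : List ℕ :=
  if 2 ≤ tg.length then
    makeIndices (sl ++ sr) tg (max (sl.length - (tg.length - 1)) 0)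
      ((sl.length : ℤ) - 1)
  else []

theorem goodIndex_append_left_iff (x y tg : List Char) (i : ℕ) :
    goodIndex (x ++ y) tg (x.length + i) ↔ goodIndex y tg i := by
  unfold goodIndex subString
  rw [List.drop_length_add_append, List.length_append, Nat.add_assoc, Nat.add_le_add_iff_left]

theorem map_add_length_makeIndices (x y tg : List Char) (lo : ℕ) (hi : ℤ) :
    (makeIndices y tg lo hi).map (· + x.length) =
      makeIndices (x ++ y) tg (x.length + lo) (x.length + hi) := by
  fun_induction makeIndices y tg lo hi with
  | case1 lo hlt => rw [makeIndices.eq_def (x ++ y), if_pos (by push_cast; omega), List.map_nil]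
  | case2 lo hle hgood ih =>
    rw [makeIndices.eq_def (x ++ y), if_neg (by push_cast; omega),
      if_pos ((goodIndex_append_left_iff x y tg lo).mpr hgood), List.map_cons, ih,
      Nat.add_comm lo, Nat.add_assoc]
  | case3 lo hle hbad ih =>
    rw [makeIndices.eq_def (x ++ y), if_neg (by push_cast; omega),
      if_neg (mt (goodIndex_append_left_iff x y tg lo).mp hbad), ih, Nat.add_assoc]

theorem makeIndices_shift_general (x y tg : List Char) (lo hi : ℕ) :
    (makeIndices y tg lo (hi : ℤ)).map (fun i => i + x.length) =
      makeIndices (x ++ y) tg (x.length + lo) ((x.length : ℤ) + (hi : ℤ)) :=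
  map_add_length_makeIndices x y tg lo hi

theorem makeIndices_shift (x y tg : List Char) (lo hi : ℕ)
    (h1 : lo ≤ hi) (h2 : 1 ≤ y.length) :
    (makeIndices y tg lo (hi : ℤ)).map (fun i => i + x.length) =
      makeIndices (x ++ y) tg (x.length + lo) ((x.length : ℤ) + (hi : ℤ)) :=
  makeIndices_shift_general x y tg lo hi
end

section
/- The string matcher structure forms a monoid: for a fixed target tg, the set of pairs (s, is) where s is a string and is is the sorted list of all good indices of s for tg, with identity ([], []) and operation (x, xis) <> (y, yis) = (x ++ y, xis ++ makeNewIndices x y tg ++ map (+ length x) yis), satisfies associativity and left/right identity. In particular, the operation is associative. -/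
/-- The string-matcher operation on pairs (string, index list). -/
def smOp (tg : List Char) (a b : List Char × List ℕ) : List Char × List ℕ :=
  (a.1 ++ b.1, a.2 ++ makeNewIndices a.1 b.1 tg ++ b.2.map (· + a.1.length))

/-!
An index list satisfying the invariant is the list of `goodIndex`-positions in an interval,
i.e. `makeIndices s tg 0 (|s| - 1) = (List.range' 0 |s|).filter (goodIndex s tg ·)`.
For such lists `smOp` turns the pairs of `x` and `y` into the pair of `x ++ y`: a match of `tg`
in `x ++ y` starting before `|x| - (|tg| - 1)` is a match in `x`, one starting at `|x|` or later
is a match in `y` shifted by `|x|`, and `makeNewIndices` collects exactly the matches straddling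
the boundary. So `smOp` on valid pairs is transported from `++` on strings, which is a monoid.
-/

theorem makeIndices_eq_filter (s tg : List Char) (lo : ℕ) (hi : ℤ) :
    makeIndices s tg lo hi =
      (List.range' lo (hi + 1 - lo).toNat).filter (goodIndex s tg ·) := by
  fun_induction makeIndices s tg lo hi with
  | case1 lo hlt => simp [show (hi + 1 - lo).toNat = 0 by omega]
  | case2 lo hle hgood ih =>
    rw [show (hi + 1 - lo).toNat = (hi + 1 - ↑(lo + 1)).toNat + 1 by omega, List.range'_succ,
      List.filter_cons_of_pos (by simpa), ih]
  | case3 lo hle hbad ih =>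
    rw [show (hi + 1 - lo).toNat = (hi + 1 - ↑(lo + 1)).toNat + 1 by omega, List.range'_succ,
      List.filter_cons_of_neg (by simpa), ih]

theorem makeIndices_sub_one (s tg : List Char) (lo n : ℕ) :
    makeIndices s tg lo ((n : ℤ) - 1) = (List.range' lo (n - lo)).filter (goodIndex s tg ·) := by
  rw [makeIndices_eq_filter, show ((n : ℤ) - 1 + 1 - lo).toNat = n - lo by omega]

theorem goodIndex_append_of_add_le {x y tg : List Char} {i : ℕ} (h : i + tg.length ≤ x.length) :
    goodIndex (x ++ y) tg i ↔ goodIndex x tg i := by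
  unfold goodIndex subString
  rw [List.drop_append_of_le_length (by omega), List.take_append_of_le_length (by simp; omega)]
  simp only [List.length_append, and_congr_right_iff]
  omega

theorem goodIndex_append_add_length {x y tg : List Char} {i : ℕ} :
    goodIndex (x ++ y) tg (i + x.length) ↔ goodIndex y tg i := by
  unfold goodIndex subString
  rw [add_comm, List.drop_append]
  simp [List.drop_eq_nil_of_le]
  omega

theorem filter_goodIndex_append_of_add_le {x y tg : List Char} {l : List ℕ}
    (h : ∀ i ∈ l, i + tg.length ≤ x.length) :
    l.filter (goodIndex (x ++ y) tg ·) = l.filter (goodIndex x tg ·) :=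
  List.filter_congr fun i hi => by simp only [goodIndex_append_of_add_le (h i hi)]

theorem filter_goodIndex_eq_nil {s tg : List Char} {l : List ℕ}
    (h : ∀ i ∈ l, s.length < i + tg.length) : l.filter (goodIndex s tg ·) = [] :=
  List.filter_eq_nil_iff.2 fun i hi hgood => by
    have := (of_decide_eq_true hgood).2
    have := h i hi
    omega

theorem map_add_length_filter_goodIndex (x y tg : List Char) (l : List ℕ) :
    (l.filter (goodIndex y tg ·)).map (· + x.length) =
      (l.map (· + x.length)).filter (goodIndex (x ++ y) tg ·) := by
  rw [List.filter_map]
  simp only [Function.comp_def, goodIndex_append_add_length]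

theorem range'_eq_append_range' (s : ℕ) {m n : ℕ} (h : m ≤ n) :
    List.range' s n = List.range' s m ++ List.range' (s + m) (n - m) := by
  conv_lhs => rw [← Nat.add_sub_cancel' h]
  rw [← List.range'_append, Nat.one_mul]

theorem makeIndices_append_makeNewIndices (x y tg : List Char) :
    makeIndices x tg 0 ((x.length : ℤ) - 1) ++ makeNewIndices x y tg =
      makeIndices (x ++ y) tg 0 ((x.length : ℤ) - 1) := by
  have in_range {lo n i : ℕ} (hi : i ∈ List.range' lo n) : lo ≤ i ∧ i < lo + n :=
    List.mem_range'_1.1 hi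
  simp only [makeIndices_sub_one, makeNewIndices, Nat.max_zero, Nat.sub_zero]
  split_ifs with htg
  · rw [range'_eq_append_range' 0 (Nat.sub_le x.length (tg.length - 1)), List.filter_append,
      List.filter_append, filter_goodIndex_eq_nil (l := List.range' (0 + _) _),
      filter_goodIndex_append_of_add_le (l := List.range' 0 _), List.append_nil, Nat.zero_add]
    · exact fun i hi => by have := in_range hi; omega
    · exact fun i hi => by have := in_range hi; omega
  · rw [List.append_nil, filter_goodIndex_append_of_add_le]
    exact fun i hi => by have := in_range hi; omega

def toMatcher (tg s : List Char) : List Char × List ℕ :=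
  (s, makeIndices s tg 0 ((s.length : ℤ) - 1))

theorem toMatcher_nil (tg : List Char) : toMatcher tg [] = ([], []) := by
  simp [toMatcher, makeIndices]

theorem smOp_toMatcher (tg x y : List Char) :
    smOp tg (toMatcher tg x) (toMatcher tg y) = toMatcher tg (x ++ y) := by
  have hshift : (List.range' 0 y.length).map (· + x.length) = List.range' x.length y.length := by
    simpa [add_comm] using List.map_add_range' (a := x.length) 0 y.length 1
  simp only [smOp, toMatcher, Prod.mk.injEq, true_and]
  rw [makeIndices_append_makeNewIndices]
  simp only [makeIndices_sub_one, Nat.sub_zero]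
  rw [map_add_length_filter_goodIndex, hshift, ← List.filter_append, List.length_append,
    range'_eq_append_range' 0 (Nat.le_add_right x.length y.length), Nat.zero_add,
    Nat.add_sub_cancel_left]

/-- String matchers (pairs satisfying the invariant that the index list is
exactly the list of all good indices) form a monoid: the operation is
associative and `([], [])` is a left and right identity. -/
theorem sm_monoid (tg : List Char) (x y z : List Char) (xis yis zis : List ℕ)
    (hx : xis = makeIndices x tg 0 ((x.length : ℤ) - 1))
    (hy : yis = makeIndices y tg 0 ((y.length : ℤ) - 1))
    (hz : zis = makeIndices z tg 0 ((z.length : ℤ) - 1)) :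
    smOp tg (x, xis) (smOp tg (y, yis) (z, zis)) =
        smOp tg (smOp tg (x, xis) (y, yis)) (z, zis)
      ∧ smOp tg ([], []) (x, xis) = (x, xis)
      ∧ smOp tg (x, xis) ([], []) = (x, xis) := by
  subst hx hy hz
  rw [← toMatcher_nil tg]
  change smOp tg (toMatcher tg x) (smOp tg (toMatcher tg y) (toMatcher tg z)) =
        smOp tg (smOp tg (toMatcher tg x) (toMatcher tg y)) (toMatcher tg z)
      ∧ smOp tg (toMatcher tg []) (toMatcher tg x) = toMatcher tg x
      ∧ smOp tg (toMatcher tg x) (toMatcher tg []) = toMatcher tg x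
  simp only [smOp_toMatcher, List.append_assoc, List.nil_append, List.append_nil, and_self]
end
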